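/- Let q be a prime power, t a positive integer, and let integers n, d satisfy t ≤ d ≤ n. Then there exist nested linear codes C2 ⊆ C1 ⊆ F_q^n with dim C1 = n + t − d, dim C2 = n − d, and M_t(C1, C2) = d. In particular, taking d = ⌊nδ⌋ for a given 0 ≤ δ ≤ 1 with t ≤ ⌊nδ⌋, there are codes with dim C1 = n + t − ⌊nδ⌋, dim C2 = n − ⌊nδ⌋, and M_t(C1, C2) = ⌊nδ⌋. -/

import Mathlib

/-- `V_I = {x ∈ F^n : i ∉ I → x i = 0}` -/
noncomputable def VI (F : Type) [Field F] (n : ℕ) (I : Finset (Fin n)) :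
    Submodule F (Fin n → F) :=
  Submodule.pi (↑I)ᶜ (fun _ => (⊥ : Submodule F F))

/-- the `t`-th relative generalized Hamming weight of `C₂ ⊆ C₁ ⊆ F^n` -/
noncomputable def RGHW (F : Type) [Field F] {n : ℕ} (t : ℕ)
    (C₁ C₂ : Submodule F (Fin n → F)) : ℕ :=
  sInf {d : ℕ | ∃ I : Finset (Fin n), I.card = d ∧
    Module.finrank F ↥(C₁ ⊓ VI F n I) ≥ Module.finrank F ↥(C₂ ⊓ VI F n I) + t}

/-- `π(q) = ∏_{i=1}^∞ (1 - q^{-i})` -/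
noncomputable def piq (q : ℝ) : ℝ := ∏' i : ℕ, (1 - (q ^ (i + 1))⁻¹)

/-- `N₁(w,u) = ∏_{i=0}^{u-1}(q^w - q^i) / ∏_{i=0}^{u-1}(q^u - q^i)` -/
noncomputable def N1 (q : ℝ) (w u : ℕ) : ℝ :=
  (∏ i ∈ Finset.range u, (q ^ w - q ^ i)) / (∏ i ∈ Finset.range u, (q ^ u - q ^ i))

/-- `N₂(w,u,v) = ∏_{i=0}^{v-1}(q^w - q^{u+i}) / ∏_{i=0}^{v-1}(q^v - q^i)` -/
noncomputable def N2 (q : ℝ) (w u v : ℕ) : ℝ :=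
  (∏ i ∈ Finset.range v, (q ^ w - q ^ (u + i))) / (∏ i ∈ Finset.range v, (q ^ v - q ^ i))

/-- `N₃(w,u,v,a) = N₁(u,a) · N₂(w-a, u-a, v-a)` -/
noncomputable def N3 (q : ℝ) (w u v a : ℕ) : ℝ :=
  N1 q u a * N2 q (w - a) (u - a) (v - a)

/-! When `t = dim C₁ - dim C₂`, the condition `dim (C₁ ∩ V_I) ≥ dim (C₂ ∩ V_I) + t` says exactly
that `C₁ ⊆ C₂ + V_I` (modular law and a dimension count). Take `C₂ = V_A` with `|A| = n - d` and
`C₁ = V_{A'} + ⟨𝟙⟩` with `A ⊆ A'`, `|A'| = n - d + t - 1`. Since `C₂ + V_I ⊆ V_{A ∪ I}` contains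
the all-ones vector only if `Aᶜ ⊆ I`, and `C₂ + V_{Aᶜ}` is everything, `M_t(C₁, C₂) = |Aᶜ| = d`. -/

section

variable {F : Type} [Field F] {n : ℕ}

theorem mem_VI {I : Finset (Fin n)} {x : Fin n → F} : x ∈ VI F n I ↔ ∀ i ∉ I, x i = 0 := by
  simp [VI, Submodule.mem_pi]

theorem VI_mono {I J : Finset (Fin n)} (h : I ⊆ J) : VI F n I ≤ VI F n J :=
  fun _ hx => mem_VI.2 fun i hi => mem_VI.1 hx i (fun hiI => hi (h hiI))

theorem finrank_VI (I : Finset (Fin n)) : Module.finrank F (VI F n I) = I.card := by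
  have hVI : VI F n I = ⨅ i ∈ (↑I : Set (Fin n))ᶜ, LinearMap.ker (LinearMap.proj i) := by
    ext x; simp [mem_VI]
  rw [hVI, (LinearMap.iInfKerProjEquiv F (fun _ : Fin n => F) disjoint_compl_right
    (by simp)).finrank_eq]
  simp

theorem VI_sup_VI_compl (I : Finset (Fin n)) : VI F n I ⊔ VI F n Iᶜ = ⊤ := by
  refine eq_top_iff.2 fun x _ => Submodule.mem_sup.2
    ⟨fun i => if i ∈ I then x i else 0, ?_, fun i => if i ∈ I then 0 else x i, ?_, ?_⟩
  · exact mem_VI.2 fun i hi => if_neg hi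
  · exact mem_VI.2 fun i hi => if_pos (by simpa using hi)
  · ext i
    by_cases hi : i ∈ I <;> simp [hi]

theorem mem_or_mem_of_mem_VI_sup {I J : Finset (Fin n)} {x : Fin n → F}
    (hx : x ∈ VI F n I ⊔ VI F n J) {i : Fin n} (hi : x i ≠ 0) : i ∈ I ∨ i ∈ J := by
  obtain ⟨y, hy, z, hz, rfl⟩ := Submodule.mem_sup.1 hx
  by_contra! h
  exact hi (by simp [mem_VI.1 hy i h.1, mem_VI.1 hz i h.2])

theorem finrank_inf_add_le_iff_le_sup {K V : Type*} [DivisionRing K] [AddCommGroup V] [Module K V]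
    [FiniteDimensional K V] {C₁ C₂ : Submodule K V} (h : C₂ ≤ C₁) (W : Submodule K V) :
    Module.finrank K ↥(C₂ ⊓ W) + (Module.finrank K C₁ - Module.finrank K C₂)
      ≤ Module.finrank K ↥(C₁ ⊓ W) ↔ C₁ ≤ C₂ ⊔ W := by
  have hmod : C₂ ⊔ C₁ ⊓ W = (C₂ ⊔ W) ⊓ C₁ := by rw [sup_inf_assoc_of_le W h, inf_comm]
  have hdim := Submodule.finrank_sup_add_finrank_inf_eq C₂ (C₁ ⊓ W)
  rw [← inf_assoc, inf_eq_left.2 h, hmod] at hdim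
  have hle : Module.finrank K ↥((C₂ ⊔ W) ⊓ C₁) ≤ Module.finrank K C₁ :=
    Submodule.finrank_mono inf_le_right
  have hC₂ : Module.finrank K C₂ ≤ Module.finrank K C₁ := Submodule.finrank_mono h
  rw [← inf_eq_right (a := C₂ ⊔ W)]
  constructor
  · exact fun hrank => Submodule.eq_of_le_of_finrank_le inf_le_right (by omega)
  · intro hC₁
    rw [hC₁] at hdim
    omega

theorem RGHW_eq_sInf {C₁ C₂ : Submodule F (Fin n → F)} (h : C₂ ≤ C₁) :
    RGHW F (Module.finrank F C₁ - Module.finrank F C₂) C₁ C₂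
      = sInf {d | ∃ I : Finset (Fin n), I.card = d ∧ C₁ ≤ C₂ ⊔ VI F n I} := by
  simp only [RGHW, ge_iff_le, finrank_inf_add_le_iff_le_sup h]

theorem RGHW_VI_eq_card_compl {A : Finset (Fin n)} {C : Submodule F (Fin n → F)}
    (hAC : VI F n A ≤ C) {v : Fin n → F} (hvC : v ∈ C) (hv : ∀ i, v i ≠ 0) :
    RGHW F (Module.finrank F C - A.card) C (VI F n A) = Aᶜ.card := by
  rw [← finrank_VI (F := F) A, RGHW_eq_sInf hAC]
  refine IsLeast.csInf_eq ⟨⟨Aᶜ, rfl, by rw [VI_sup_VI_compl]; exact le_top⟩, ?_⟩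
  rintro _ ⟨I, rfl, hI⟩
  exact Finset.card_le_card fun i hi =>
    (mem_or_mem_of_mem_VI_sup (hI hvC) (hv i)).resolve_left (Finset.mem_compl.1 hi)

variable (F) in
theorem exists_codes_RGHW_eq {t d : ℕ} (ht : 1 ≤ t) (htd : t ≤ d) (hdn : d ≤ n) :
    ∃ C₁ C₂ : Submodule F (Fin n → F), C₂ ≤ C₁ ∧
      Module.finrank F C₁ = n + t - d ∧ Module.finrank F C₂ = n - d ∧
      RGHW F t C₁ C₂ = d := by
  obtain ⟨A', -, hA'⟩ := (Finset.univ : Finset (Fin n)).exists_subset_card_eq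
    (n := n - d + (t - 1)) (by simp only [Finset.card_univ, Fintype.card_fin]; omega)
  obtain ⟨A, hAA', hA⟩ := A'.exists_subset_card_eq (n := n - d) (by omega)
  have hone : (1 : Fin n → F) ∉ VI F n A' := by
    obtain ⟨i, hi⟩ := Finset.card_pos.1
      (by rw [Finset.card_compl, Fintype.card_fin]; omega : 0 < A'ᶜ.card)
    exact fun h => one_ne_zero (mem_VI.1 h i (Finset.mem_compl.1 hi))
  set C₁ := VI F n A' ⊔ Submodule.span F {1}
  have hC : VI F n A ≤ C₁ := (VI_mono hAA').trans le_sup_left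
  have hrank : Module.finrank F C₁ = n + t - d := by
    rw [Submodule.finrank_sup_span_singleton hone, finrank_VI]; omega
  refine ⟨C₁, VI F n A, hC, hrank, by rw [finrank_VI, hA], ?_⟩
  have hRGHW := RGHW_VI_eq_card_compl hC
    (Submodule.mem_sup_right (Submodule.mem_span_singleton_self 1)) fun _ => one_ne_zero
  rwa [hrank, hA, Finset.card_compl, Fintype.card_fin, hA, show n + t - d - (n - d) = t by omega,
    show n - (n - d) = d by omega] at hRGHW

end

theorem exists_codes_rghw_floor_general (F : Type) [Field F]
    (n t d : ℕ) (ht : 1 ≤ t) (htd : t ≤ d) (hdn : d ≤ n) :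
    (∃ C₁ C₂ : Submodule F (Fin n → F), C₂ ≤ C₁ ∧
      Module.finrank F C₁ = n + t - d ∧ Module.finrank F C₂ = n - d ∧
      RGHW F t C₁ C₂ = d) ∧
    (∀ δ : ℝ, 0 ≤ δ → δ ≤ 1 → t ≤ ⌊(n : ℝ) * δ⌋₊ →
      ∃ C₁ C₂ : Submodule F (Fin n → F), C₂ ≤ C₁ ∧
        Module.finrank F C₁ = n + t - ⌊(n : ℝ) * δ⌋₊ ∧
        Module.finrank F C₂ = n - ⌊(n : ℝ) * δ⌋₊ ∧
        RGHW F t C₁ C₂ = ⌊(n : ℝ) * δ⌋₊) :=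
  ⟨exists_codes_RGHW_eq F ht htd hdn, fun _ _ hδ htδ => exists_codes_RGHW_eq F ht htδ
    (Nat.floor_le_of_le (mul_le_of_le_one_right n.cast_nonneg hδ))⟩

/-- For any `t ≤ d ≤ n` there are nested codes with `dim C₁ = n + t - d`,
`dim C₂ = n - d` and `M_t(C₁,C₂) = d`; in particular for `d = ⌊nδ⌋`. -/
theorem exists_codes_rghw_floor (F : Type) [Field F] [Fintype F]
    (n t d : ℕ) (ht : 1 ≤ t) (htd : t ≤ d) (hdn : d ≤ n) :
    (∃ C₁ C₂ : Submodule F (Fin n → F), C₂ ≤ C₁ ∧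
      Module.finrank F C₁ = n + t - d ∧ Module.finrank F C₂ = n - d ∧
      RGHW F t C₁ C₂ = d) ∧
    (∀ δ : ℝ, 0 ≤ δ → δ ≤ 1 → t ≤ ⌊(n : ℝ) * δ⌋₊ →
      ∃ C₁ C₂ : Submodule F (Fin n → F), C₂ ≤ C₁ ∧
        Module.finrank F C₁ = n + t - ⌊(n : ℝ) * δ⌋₊ ∧
        Module.finrank F C₂ = n - ⌊(n : ℝ) * δ⌋₊ ∧
        RGHW F t C₁ C₂ = ⌊(n : ℝ) * δ⌋₊) :=
  exists_codes_rghw_floor_general F n t d ht htd hdn
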